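/- (Young integral) Let I ⊆ ℝ be an interval, F ∈ C^ρ(I), X ∈ C^γ(I) with γ + ρ > 1. Define ∫_s^t F dX := [F δX - Λ N(F δX)]_{st}. Then for all s,t ∈ I: |∫_s^t (F_u - F_s) dX_u| ≤ (1/(2^{γ+ρ} - 2)) |t-s|^{γ+ρ} ‖F‖_ρ ‖X‖_γ. -/

import Mathlib

/-!
The germ `Ξ s t = F s (X t - X s)` has coboundary `Ξ a c - Ξ a b - Ξ b c = (F a - F b)(X c - X b)`
of order `K |c - a| ^ z`, with `K = KF KX` and `z = γ + ρ > 1`. Halving every cell of the dyadic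
partition of `[s, t]` into `2 ^ m` cells moves the Riemann sum by at most
`K 2⁻ᶻ |t - s| ^ z (2 ^ (1 - z)) ^ m`, so the dyadic Riemann sums converge, and their limit differs
from `Ξ s t` by at most the sum of this geometric series, `K |t - s| ^ z / (2 ^ z - 2)`.
The limit is additive over intervals: at the points of a uniform grid because the `n 2 ^ m`-cell
sums have the same limit, then everywhere because it is continuous, as a uniform limit of
continuous functions on compact intervals. Reversing an interval only changes the sums by
`O(2 ^ ((1 - z) m))`, so the limit is also antisymmetric, and its indefinite integral from any base
point is the required `A`.
-/

open Filter Topology Finset Set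

noncomputable section

lemma continuousOn_of_norm_sub_le_rpow {E : Type*} [NormedAddCommGroup E] {I : Set ℝ} {G : ℝ → E}
    {C e : ℝ} (he : 0 < e)
    (hG : ∀ s ∈ I, ∀ t ∈ I, ‖G t - G s‖ ≤ C * |t - s| ^ e) : ContinuousOn G I := by
  intro x hx
  have hlim : Tendsto (fun y => C * |y - x| ^ e) (𝓝[I] x) (𝓝 0) := by
    have hc : Continuous fun y : ℝ => C * |y - x| ^ e := by
      have := Real.continuous_rpow_const he.le
      fun_prop
    simpa [Real.zero_rpow he.ne'] using (hc.tendsto x).mono_left nhdsWithin_le_nhds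
  rw [ContinuousWithinAt, ← tendsto_sub_nhds_zero_iff]
  exact squeeze_zero_norm' (eventually_nhdsWithin_of_forall fun y hy => hG x hx y hy) hlim

namespace Sewing

def gridPt (s t : ℝ) (N k : ℕ) : ℝ := s + k / N * (t - s)

@[simp] lemma gridPt_zero (s t : ℝ) (N : ℕ) : gridPt s t N 0 = s := by simp [gridPt]

lemma gridPt_self (s t : ℝ) {N : ℕ} (hN : N ≠ 0) : gridPt s t N N = t := by
  simp [gridPt, hN]

lemma gridPt_mem_uIcc (s t : ℝ) {N k : ℕ} (hk : k ≤ N) : gridPt s t N k ∈ uIcc s t := by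
  rw [← segment_eq_uIcc, segment_eq_image']
  refine ⟨k / N, ⟨by positivity, div_le_one_of_le₀ (by exact_mod_cast hk) (by positivity)⟩, ?_⟩
  simp [gridPt]

lemma abs_gridPt_succ_sub (s t : ℝ) {N : ℕ} (hN : N ≠ 0) (k : ℕ) :
    |gridPt s t N (k + 1) - gridPt s t N k| = |t - s| / N := by
  rw [show gridPt s t N (k + 1) - gridPt s t N k = (t - s) / N by
    simp only [gridPt]; push_cast; field_simp; ring, abs_div, Nat.abs_cast]

lemma gridPt_gridPt (s t : ℝ) {n N : ℕ} (hn : n ≠ 0) (hN : N ≠ 0) (i j : ℕ) :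
    gridPt (gridPt s t n i) (gridPt s t n (i + 1)) N j = gridPt s t (n * N) (i * N + j) := by
  simp only [gridPt]; push_cast; field_simp; ring

lemma gridPt_gridPt_add (s t : ℝ) (n i : ℕ) {l : ℕ} (hl : l ≠ 0) (j : ℕ) :
    gridPt (gridPt s t n i) (gridPt s t n (i + l)) l j = gridPt s t n (i + j) := by
  simp only [gridPt]; push_cast; field_simp; ring

lemma gridPt_swap (s t : ℝ) {N k : ℕ} (hN : N ≠ 0) (hk : k ≤ N) :
    gridPt t s N k = gridPt s t N (N - k) := by
  simp only [gridPt]; rw [Nat.cast_sub hk]; field_simp; ring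

variable {E : Type*} [NormedAddCommGroup E]

def riemannSum (Ξ : ℝ → ℝ → E) (N : ℕ) (s t : ℝ) : E :=
  ∑ k ∈ range N, Ξ (gridPt s t N k) (gridPt s t N (k + 1))

lemma riemannSum_one (Ξ : ℝ → ℝ → E) (s t : ℝ) : riemannSum Ξ 1 s t = Ξ s t := by
  simp [riemannSum, gridPt_self]

lemma sum_riemannSum_gridPt (Ξ : ℝ → ℝ → E) (s t : ℝ) {n N : ℕ} (hn : n ≠ 0) (hN : N ≠ 0) :
    ∑ i ∈ range n, riemannSum Ξ N (gridPt s t n i) (gridPt s t n (i + 1)) =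
      riemannSum Ξ (n * N) s t := by
  have hsplit : ∀ (f : ℕ → E) (n : ℕ),
      ∑ k ∈ range (n * N), f k = ∑ i ∈ range n, ∑ j ∈ range N, f (i * N + j) := by
    intro f n
    induction n with
    | zero => simp
    | succ n ih => rw [Nat.succ_mul, sum_range_add, ih, sum_range_succ]
  simp only [riemannSum, hsplit, gridPt_gridPt s t hn hN, add_assoc]

lemma riemannSum_swap (Ξ : ℝ → ℝ → E) (N : ℕ) (s t : ℝ) :
    riemannSum Ξ N t s = ∑ k ∈ range N, Ξ (gridPt s t N (k + 1)) (gridPt s t N k) := by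
  rw [riemannSum, ← sum_range_reflect]
  refine sum_congr rfl fun k hk => ?_
  have hk := mem_range.1 hk
  rw [gridPt_swap s t (by omega) (by omega), gridPt_swap s t (by omega) (by omega)]
  congr 2 <;> omega

lemma continuousOn_riemannSum {I : Set ℝ} (hI : I.OrdConnected) {Ξ : ℝ → ℝ → E}
    (hΞ : ContinuousOn (Function.uncurry Ξ) (I ×ˢ I)) (N : ℕ) :
    ContinuousOn (fun p : ℝ × ℝ => riemannSum Ξ N p.1 p.2) (I ×ˢ I) := by
  have hx (k : ℕ) (hk : k ≤ N) : MapsTo (fun p : ℝ × ℝ => gridPt p.1 p.2 N k) (I ×ˢ I) I :=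
    fun p hp => hI.uIcc_subset hp.1 hp.2 (gridPt_mem_uIcc _ _ hk)
  refine continuousOn_finsetSum _ fun k hk => hΞ.comp
    (f := fun p : ℝ × ℝ => (gridPt p.1 p.2 N k, gridPt p.1 p.2 N (k + 1)))
    (Continuous.continuousOn (by simp only [gridPt]; fun_prop)) ?_
  exact fun p hp => ⟨hx k (mem_range.1 hk).le hp, hx (k + 1) (mem_range.1 hk) hp⟩

/-- `Ξ a c - Ξ a b - Ξ b c` is the paper's `(NΞ)_{abc}`. -/
def HasCoboundaryBound (I : Set ℝ) (Ξ : ℝ → ℝ → E) (K z : ℝ) : Prop :=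
  ∀ a ∈ I, ∀ b ∈ I, ∀ c ∈ I, ‖Ξ a c - Ξ a b - Ξ b c‖ ≤ K * max |b - a| |c - b| ^ z

lemma norm_sum_range_two_pow_le {f : ℕ → E} {C D z : ℝ} (hD : 0 ≤ D) (m : ℕ)
    (hf : ∀ i < 2 ^ m, ‖f i‖ ≤ C * (D / 2 ^ m) ^ z) :
    ‖∑ i ∈ range (2 ^ m), f i‖ ≤ C * D ^ z * (2 / 2 ^ z) ^ m := by
  calc ‖∑ i ∈ range (2 ^ m), f i‖ ≤ ∑ i ∈ range (2 ^ m), ‖f i‖ := norm_sum_le _ _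
    _ ≤ ∑ _i ∈ range (2 ^ m), C * (D / 2 ^ m) ^ z :=
        sum_le_sum fun i hi => hf i (mem_range.1 hi)
    _ = C * D ^ z * (2 / 2 ^ z) ^ m := by
        rw [sum_const, card_range, nsmul_eq_mul, Real.div_rpow hD (by positivity),
          ← Real.rpow_pow_comm zero_le_two]
        push_cast
        rw [div_pow]
        field_simp

lemma norm_riemannSum_two_pow_mul_sub_le {I : Set ℝ} (hI : I.OrdConnected) {Ξ : ℝ → ℝ → E}
    {C z : ℝ} {n : ℕ} (hn : n ≠ 0)
    (hΞ : ∀ u ∈ I, ∀ v ∈ I, ‖riemannSum Ξ n u v - Ξ u v‖ ≤ C * |v - u| ^ z)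
    {s t : ℝ} (hs : s ∈ I) (ht : t ∈ I) (m : ℕ) :
    ‖riemannSum Ξ (2 ^ m * n) s t - riemannSum Ξ (2 ^ m) s t‖ ≤
      C * |t - s| ^ z * (2 / 2 ^ z) ^ m := by
  have h2m : 2 ^ m ≠ 0 := pow_ne_zero m two_ne_zero
  rw [← sum_riemannSum_gridPt Ξ s t h2m hn, riemannSum, ← sum_sub_distrib]
  refine norm_sum_range_two_pow_le (abs_nonneg _) m fun i hi => ?_
  have hx : ∀ k ≤ 2 ^ m, gridPt s t (2 ^ m) k ∈ I :=
    fun k hk => hI.uIcc_subset hs ht (gridPt_mem_uIcc s t hk)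
  convert hΞ _ (hx i hi.le) _ (hx (i + 1) hi) using 3
  rw [abs_gridPt_succ_sub s t h2m]
  push_cast
  rfl

namespace HasCoboundaryBound

variable {I : Set ℝ} {Ξ : ℝ → ℝ → E} {K z : ℝ}

lemma apply_self (h : HasCoboundaryBound I Ξ K z) (hz : 0 < z) {a : ℝ} (ha : a ∈ I) :
    Ξ a a = 0 := by
  simpa [Real.zero_rpow hz.ne'] using h a ha a ha a ha

lemma norm_swap_add_le (h : HasCoboundaryBound I Ξ K z) (hz : 0 < z) {a b : ℝ}
    (ha : a ∈ I) (hb : b ∈ I) : ‖Ξ b a + Ξ a b‖ ≤ K * |b - a| ^ z := by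
  have := h b hb a ha b hb
  rwa [h.apply_self hz hb, zero_sub, ← neg_add', norm_neg, abs_sub_comm a b, max_self] at this

lemma norm_riemannSum_two_sub_le (h : HasCoboundaryBound I Ξ K z) (hI : I.OrdConnected)
    {u v : ℝ} (hu : u ∈ I) (hv : v ∈ I) :
    ‖riemannSum Ξ 2 u v - Ξ u v‖ ≤ K / 2 ^ z * |v - u| ^ z := by
  have hm : gridPt u v 2 1 ∈ I := hI.uIcc_subset hu hv (gridPt_mem_uIcc u v one_le_two)
  have hmid : gridPt u v 2 1 = u + (v - u) / 2 := by simp only [gridPt]; push_cast; ring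
  have h1 : |gridPt u v 2 1 - u| = |v - u| / 2 := by
    rw [hmid, add_sub_cancel_left, abs_div, abs_two]
  have h2 : |v - gridPt u v 2 1| = |v - u| / 2 := by
    rw [hmid, show v - (u + (v - u) / 2) = (v - u) / 2 by ring, abs_div, abs_two]
  calc ‖riemannSum Ξ 2 u v - Ξ u v‖ = ‖Ξ u v - Ξ u (gridPt u v 2 1) - Ξ (gridPt u v 2 1) v‖ := by
        simp only [riemannSum, sum_range_succ, sum_range_zero, zero_add, Nat.reduceAdd,
          gridPt_zero, gridPt_self u v two_ne_zero]
        rw [← norm_neg]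
        abel_nf
    _ ≤ K * max |gridPt u v 2 1 - u| |v - gridPt u v 2 1| ^ z := h u hu _ hm v hv
    _ = K / 2 ^ z * |v - u| ^ z := by
        rw [h1, h2, max_self, Real.div_rpow (abs_nonneg _) zero_le_two]; ring

lemma norm_riemannSum_sub_le (h : HasCoboundaryBound I Ξ K z) (hI : I.OrdConnected)
    (hz : 0 < z) (hK : 0 ≤ K) {n : ℕ} (hn : n ≠ 0) {u v : ℝ} (hu : u ∈ I) (hv : v ∈ I) :
    ‖riemannSum Ξ n u v - Ξ u v‖ ≤ n * K * |v - u| ^ z := by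
  set x := gridPt u v n
  have hx : ∀ k ≤ n, x k ∈ uIcc u v := fun k hk => gridPt_mem_uIcc u v hk
  have htelescope : Ξ u v = ∑ k ∈ range n, (Ξ u (x (k + 1)) - Ξ u (x k)) := by
    rw [sum_range_sub (fun k => Ξ u (x k))]
    simp only [x, gridPt_self u v hn, gridPt_zero, h.apply_self hz hu, sub_zero]
  have hterm : ∀ k ∈ range n,
      ‖Ξ (x k) (x (k + 1)) - (Ξ u (x (k + 1)) - Ξ u (x k))‖ ≤ K * |v - u| ^ z := by
    intro k hk
    have hk := mem_range.1 hk
    have hxk := hx k hk.le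
    have hxk' := hx (k + 1) hk
    calc ‖Ξ (x k) (x (k + 1)) - (Ξ u (x (k + 1)) - Ξ u (x k))‖
        = ‖Ξ u (x (k + 1)) - Ξ u (x k) - Ξ (x k) (x (k + 1))‖ := by
          rw [← norm_neg]; congr 1; abel
      _ ≤ K * max |x k - u| |x (k + 1) - x k| ^ z :=
          h u hu _ (hI.uIcc_subset hu hv hxk) _ (hI.uIcc_subset hu hv hxk')
      _ ≤ K * |v - u| ^ z := by
          gcongr
          exact max_le (abs_sub_left_of_mem_uIcc hxk)
            (abs_sub_le_of_uIcc_subset_uIcc (uIcc_subset_uIcc hxk hxk'))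
  calc ‖riemannSum Ξ n u v - Ξ u v‖
      = ‖∑ k ∈ range n, (Ξ (x k) (x (k + 1)) - (Ξ u (x (k + 1)) - Ξ u (x k)))‖ := by
        rw [htelescope, riemannSum, ← sum_sub_distrib]
    _ ≤ ∑ _k ∈ range n, K * |v - u| ^ z := (norm_sum_le _ _).trans (sum_le_sum hterm)
    _ = n * K * |v - u| ^ z := by rw [sum_const, card_range, nsmul_eq_mul, mul_assoc]

lemma norm_riemannSum_two_pow_succ_sub_le (h : HasCoboundaryBound I Ξ K z)
    (hI : I.OrdConnected) {s t : ℝ} (hs : s ∈ I) (ht : t ∈ I) (m : ℕ) :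
    ‖riemannSum Ξ (2 ^ (m + 1)) s t - riemannSum Ξ (2 ^ m) s t‖ ≤
      K / 2 ^ z * |t - s| ^ z * (2 / 2 ^ z) ^ m := by
  rw [pow_succ]
  exact norm_riemannSum_two_pow_mul_sub_le hI two_ne_zero
    (fun u hu v hv => h.norm_riemannSum_two_sub_le hI hu hv) hs ht m

end HasCoboundaryBound

lemma two_div_two_rpow_lt_one {z : ℝ} (hz : 1 < z) : 2 / (2 : ℝ) ^ z < 1 := by
  rw [div_lt_one (by positivity)]
  simpa using Real.rpow_lt_rpow_of_exponent_lt one_lt_two hz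

lemma tendsto_mul_two_div_two_rpow_pow (C : ℝ) {z : ℝ} (hz : 1 < z) :
    Tendsto (fun m : ℕ => C * (2 / (2 : ℝ) ^ z) ^ m) atTop (𝓝 0) := by
  simpa using (tendsto_pow_atTop_nhds_zero_of_lt_one (by positivity)
    (two_div_two_rpow_lt_one hz)).const_mul C

variable [CompleteSpace E]

/-- The paper's `(1 - ΛN) Ξ`, i.e. `∫_s^t F dX` for the germ `Ξ = F δX`. -/
def sewing (Ξ : ℝ → ℝ → E) (s t : ℝ) : E :=
  limUnder atTop fun m : ℕ => riemannSum Ξ (2 ^ m) s t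

namespace HasCoboundaryBound

variable {I : Set ℝ} {Ξ : ℝ → ℝ → E} {K z : ℝ}

lemma tendsto_riemannSum_sewing (h : HasCoboundaryBound I Ξ K z) (hI : I.OrdConnected)
    (hz : 1 < z) {s t : ℝ} (hs : s ∈ I) (ht : t ∈ I) :
    Tendsto (fun m : ℕ => riemannSum Ξ (2 ^ m) s t) atTop (𝓝 (sewing Ξ s t)) :=
  (cauchySeq_of_le_geometric _ _ (two_div_two_rpow_lt_one hz) fun m => by
    rw [dist_comm, dist_eq_norm]
    exact h.norm_riemannSum_two_pow_succ_sub_le hI hs ht m).tendsto_limUnder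

lemma norm_sewing_sub_riemannSum_le (h : HasCoboundaryBound I Ξ K z) (hI : I.OrdConnected)
    (hz : 1 < z) {s t : ℝ} (hs : s ∈ I) (ht : t ∈ I) (m : ℕ) :
    ‖sewing Ξ s t - riemannSum Ξ (2 ^ m) s t‖ ≤
      K / (2 ^ z - 2) * |t - s| ^ z * (2 / 2 ^ z) ^ m := by
  have hgeom := dist_le_of_le_geometric_of_tendsto _ _ (two_div_two_rpow_lt_one hz)
    (fun m => by
      rw [dist_comm, dist_eq_norm]
      exact h.norm_riemannSum_two_pow_succ_sub_le hI hs ht m)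
    (h.tendsto_riemannSum_sewing hI hz hs ht) m
  rw [dist_comm, dist_eq_norm] at hgeom
  refine hgeom.trans_eq ?_
  have h2z : (2 : ℝ) ^ z - 2 ≠ 0 := by
    linarith [(div_lt_one (by positivity)).1 (two_div_two_rpow_lt_one hz)]
  field_simp

lemma norm_sewing_sub_le (h : HasCoboundaryBound I Ξ K z) (hI : I.OrdConnected)
    (hz : 1 < z) {s t : ℝ} (hs : s ∈ I) (ht : t ∈ I) :
    ‖sewing Ξ s t - Ξ s t‖ ≤ K / (2 ^ z - 2) * |t - s| ^ z := by
  simpa [riemannSum_one] using h.norm_sewing_sub_riemannSum_le hI hz hs ht 0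

lemma sewing_self (h : HasCoboundaryBound I Ξ K z) (hI : I.OrdConnected)
    (hz : 1 < z) {s : ℝ} (hs : s ∈ I) : sewing Ξ s s = 0 := by
  simpa [h.apply_self (zero_lt_one.trans hz) hs, Real.zero_rpow (zero_lt_one.trans hz).ne']
    using h.norm_sewing_sub_le hI hz hs hs

lemma tendsto_riemannSum_two_pow_mul (h : HasCoboundaryBound I Ξ K z) (hI : I.OrdConnected)
    (hz : 1 < z) (hK : 0 ≤ K) {n : ℕ} (hn : n ≠ 0) {s t : ℝ} (hs : s ∈ I) (ht : t ∈ I) :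
    Tendsto (fun m : ℕ => riemannSum Ξ (2 ^ m * n) s t) atTop (𝓝 (sewing Ξ s t)) := by
  have hdiff : Tendsto (fun m : ℕ => riemannSum Ξ (2 ^ m * n) s t - riemannSum Ξ (2 ^ m) s t)
      atTop (𝓝 0) :=
    squeeze_zero_norm (norm_riemannSum_two_pow_mul_sub_le hI hn
      (fun u hu v hv => h.norm_riemannSum_sub_le hI (zero_lt_one.trans hz) hK hn hu hv) hs ht)
      (tendsto_mul_two_div_two_rpow_pow _ hz)
  simpa using (h.tendsto_riemannSum_sewing hI hz hs ht).add hdiff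

lemma sum_sewing_gridPt (h : HasCoboundaryBound I Ξ K z) (hI : I.OrdConnected)
    (hz : 1 < z) (hK : 0 ≤ K) {n : ℕ} (hn : n ≠ 0) {s t : ℝ} (hs : s ∈ I) (ht : t ∈ I) :
    ∑ i ∈ range n, sewing Ξ (gridPt s t n i) (gridPt s t n (i + 1)) = sewing Ξ s t := by
  have hx : ∀ k ≤ n, gridPt s t n k ∈ I :=
    fun k hk => hI.uIcc_subset hs ht (gridPt_mem_uIcc s t hk)
  have hlim := tendsto_finsetSum (range n) fun i hi =>
    h.tendsto_riemannSum_sewing hI hz (hx i (mem_range.1 hi).le) (hx (i + 1) (mem_range.1 hi))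
  simp only [sum_riemannSum_gridPt Ξ s t hn (pow_ne_zero _ two_ne_zero), mul_comm n] at hlim
  exact tendsto_nhds_unique hlim (h.tendsto_riemannSum_two_pow_mul hI hz hK hn hs ht)

lemma sewing_add_sewing_gridPt (h : HasCoboundaryBound I Ξ K z) (hI : I.OrdConnected)
    (hz : 1 < z) (hK : 0 ≤ K) {a c : ℝ} (ha : a ∈ I) (hc : c ∈ I) {n k : ℕ} (hk : k ≤ n) :
    sewing Ξ a (gridPt a c n k) + sewing Ξ (gridPt a c n k) c = sewing Ξ a c := by
  rcases eq_or_ne k 0 with rfl | hk0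
  · rw [gridPt_zero, h.sewing_self hI hz ha, zero_add]
  rcases eq_or_ne k n with rfl | hkn
  · rw [gridPt_self a c hk0, h.sewing_self hI hz hc, add_zero]
  have hnk : n - k ≠ 0 := by omega
  have hb : gridPt a c n k ∈ I := hI.uIcc_subset ha hc (gridPt_mem_uIcc a c hk)
  have hleft (i : ℕ) : gridPt a (gridPt a c n k) k i = gridPt a c n i := by
    simpa using gridPt_gridPt_add a c n 0 hk0 i
  have hright (j : ℕ) : gridPt (gridPt a c n k) c (n - k) j = gridPt a c n (k + j) := by
    simpa [Nat.add_sub_cancel' hk, gridPt_self a c (by omega : n ≠ 0)] using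
      gridPt_gridPt_add a c n k hnk j
  have hsplit := sum_range_add (fun i => sewing Ξ (gridPt a c n i) (gridPt a c n (i + 1))) k (n - k)
  rw [Nat.add_sub_cancel' hk] at hsplit
  rw [← h.sum_sewing_gridPt hI hz hK hk0 ha hb, ← h.sum_sewing_gridPt hI hz hK hnk hb hc,
    ← h.sum_sewing_gridPt hI hz hK (by omega : n ≠ 0) ha hc, hsplit]
  simp only [hleft, hright, add_assoc]

lemma continuousOn_sewing (h : HasCoboundaryBound I Ξ K z) (hI : I.OrdConnected)
    (hΞ : ContinuousOn (Function.uncurry Ξ) (I ×ˢ I)) (hz : 1 < z) (hK : 0 ≤ K)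
    {a c : ℝ} (ha : a ∈ I) (hc : c ∈ I) :
    ContinuousOn (fun p : ℝ × ℝ => sewing Ξ p.1 p.2) (uIcc a c ×ˢ uIcc a c) := by
  have hS : uIcc a c ⊆ I := hI.uIcc_subset ha hc
  have hunif : TendstoUniformlyOn (fun (m : ℕ) (p : ℝ × ℝ) => riemannSum Ξ (2 ^ m) p.1 p.2)
      (fun p => sewing Ξ p.1 p.2) atTop (uIcc a c ×ˢ uIcc a c) := by
    rw [Metric.tendstoUniformlyOn_iff]
    intro ε hε
    have hC : 0 ≤ K / (2 ^ z - 2) := div_nonneg hK (by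
      linarith [(div_lt_one (by positivity)).1 (two_div_two_rpow_lt_one hz)])
    filter_upwards [(tendsto_mul_two_div_two_rpow_pow (K / (2 ^ z - 2) * |c - a| ^ z)
      hz).eventually (gt_mem_nhds hε)] with m hm p hp
    rw [dist_eq_norm]
    refine lt_of_le_of_lt
      ((h.norm_sewing_sub_riemannSum_le hI hz (hS hp.1) (hS hp.2) m).trans ?_) hm
    gcongr _ * ?_ ^ _ * _
    exact abs_sub_le_of_uIcc_subset_uIcc (uIcc_subset_uIcc hp.1 hp.2)
  exact hunif.continuousOn (Frequently.of_forall fun m =>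
    (continuousOn_riemannSum hI hΞ _).mono (prod_mono hS hS))

lemma sewing_add_sewing_of_mem_uIcc (h : HasCoboundaryBound I Ξ K z) (hI : I.OrdConnected)
    (hΞ : ContinuousOn (Function.uncurry Ξ) (I ×ˢ I)) (hz : 1 < z) (hK : 0 ≤ K)
    {a b c : ℝ} (ha : a ∈ I) (hc : c ∈ I) (hb : b ∈ uIcc a c) :
    sewing Ξ a b + sewing Ξ b c = sewing Ξ a c := by
  obtain ⟨θ, hθ, rfl⟩ : b ∈ (fun θ : ℝ => a + θ • (c - a)) '' Icc 0 1 := by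
    rwa [← segment_eq_image', segment_eq_uIcc]
  set x : ℕ → ℝ := fun n => gridPt a c n ⌊θ * n⌋₊
  have hx_mem (n : ℕ) : x n ∈ uIcc a c :=
    gridPt_mem_uIcc a c (Nat.floor_le_of_le (mul_le_of_le_one_left n.cast_nonneg hθ.2))
  have hx_lim : Tendsto x atTop (𝓝 (a + θ • (c - a))) := by
    simpa [x, gridPt] using (((tendsto_nat_floor_mul_div_atTop hθ.1).comp
      tendsto_natCast_atTop_atTop).mul_const (c - a)).const_add a
  have hcont := h.continuousOn_sewing hI hΞ hz hK ha hc
  have hg : ContinuousWithinAt (fun b => sewing Ξ a b + sewing Ξ b c) (uIcc a c)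
      (a + θ • (c - a)) :=
    ((hcont.comp (continuousOn_const.prodMk continuousOn_id)
        fun b hb => ⟨left_mem_uIcc, hb⟩).add
      (hcont.comp (continuousOn_id.prodMk continuousOn_const)
        fun b hb => ⟨hb, right_mem_uIcc⟩)) _ hb
  refine tendsto_nhds_unique (hg.tendsto.comp
    (tendsto_nhdsWithin_iff.2 ⟨hx_lim, Eventually.of_forall hx_mem⟩)) ?_
  simp only [Function.comp_def, x, h.sewing_add_sewing_gridPt hI hz hK ha hc
    (Nat.floor_le_of_le (mul_le_of_le_one_left (Nat.cast_nonneg _) hθ.2))]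
  exact tendsto_const_nhds

lemma sewing_swap (h : HasCoboundaryBound I Ξ K z) (hI : I.OrdConnected) (hz : 1 < z)
    {s t : ℝ} (hs : s ∈ I) (ht : t ∈ I) : sewing Ξ t s = -sewing Ξ s t := by
  have hbound (m : ℕ) : ‖riemannSum Ξ (2 ^ m) t s + riemannSum Ξ (2 ^ m) s t‖ ≤
      K * |t - s| ^ z * (2 / 2 ^ z) ^ m := by
    rw [riemannSum_swap, riemannSum, ← sum_add_distrib]
    refine norm_sum_range_two_pow_le (abs_nonneg _) m fun i hi => ?_
    have hx : ∀ k ≤ 2 ^ m, gridPt s t (2 ^ m) k ∈ I :=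
      fun k hk => hI.uIcc_subset hs ht (gridPt_mem_uIcc s t hk)
    convert h.norm_swap_add_le (zero_lt_one.trans hz) (hx i hi.le) (hx (i + 1) hi) using 3
    rw [abs_gridPt_succ_sub s t (pow_ne_zero m two_ne_zero)]
    push_cast
    rfl
  rw [eq_neg_iff_add_eq_zero]
  exact tendsto_nhds_unique ((h.tendsto_riemannSum_sewing hI hz ht hs).add
    (h.tendsto_riemannSum_sewing hI hz hs ht))
    (squeeze_zero_norm hbound (tendsto_mul_two_div_two_rpow_pow _ hz))

lemma sewing_add_sewing (h : HasCoboundaryBound I Ξ K z) (hI : I.OrdConnected)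
    (hΞ : ContinuousOn (Function.uncurry Ξ) (I ×ˢ I)) (hz : 1 < z) (hK : 0 ≤ K)
    {a b c : ℝ} (ha : a ∈ I) (hb : b ∈ I) (hc : c ∈ I) :
    sewing Ξ a b + sewing Ξ b c = sewing Ξ a c := by
  have hmiddle : b ∈ uIcc a c ∨ a ∈ uIcc b c ∨ c ∈ uIcc a b := by
    simp only [Set.mem_uIcc]
    rcases le_total a b with _ | _ <;> rcases le_total b c with _ | _ <;>
      rcases le_total a c with _ | _ <;> tauto
  have hswap {u v : ℝ} (hu : u ∈ I) (hv : v ∈ I) := h.sewing_swap hI hz hu hv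
  rcases hmiddle with hb' | ha' | hc'
  · exact h.sewing_add_sewing_of_mem_uIcc hI hΞ hz hK ha hc hb'
  · rw [← h.sewing_add_sewing_of_mem_uIcc hI hΞ hz hK hb hc ha', hswap ha hb]
    abel
  · rw [← h.sewing_add_sewing_of_mem_uIcc hI hΞ hz hK ha hb hc', hswap hb hc]
    abel

theorem exists_forall_norm_sub_sub_le (h : HasCoboundaryBound I Ξ K z) (hI : I.OrdConnected)
    (hΞ : ContinuousOn (Function.uncurry Ξ) (I ×ˢ I)) (hz : 1 < z) (hK : 0 ≤ K) :
    ∃ A : ℝ → E, ∀ s ∈ I, ∀ t ∈ I, ‖A t - A s - Ξ s t‖ ≤ K / (2 ^ z - 2) * |t - s| ^ z := by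
  rcases I.eq_empty_or_nonempty with rfl | ⟨o, ho⟩
  · exact ⟨0, by simp⟩
  refine ⟨sewing Ξ o, fun s hs t ht => ?_⟩
  rw [← h.sewing_add_sewing hI hΞ hz hK ho hs ht, add_sub_cancel_left]
  exact h.norm_sewing_sub_le hI hz hs ht

end HasCoboundaryBound

section YoungGerm

variable {I : Set ℝ} {F X : ℝ → ℝ}

lemma continuousOn_uncurry_mul_sub (hF : ContinuousOn F I) (hX : ContinuousOn X I) :
    ContinuousOn (Function.uncurry fun s t => F s * (X t - X s)) (I ×ˢ I) :=
  (hF.comp continuousOn_fst fun _ hp => hp.1).mul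
    ((hX.comp continuousOn_snd fun _ hp => hp.2).sub (hX.comp continuousOn_fst fun _ hp => hp.1))

lemma hasCoboundaryBound_mul_sub {γ ρ KF KX : ℝ} (hγ : 0 ≤ γ) (hρ : 0 ≤ ρ) (hKF : 0 ≤ KF)
    (hKX : 0 ≤ KX) (hF : ∀ s ∈ I, ∀ t ∈ I, |F t - F s| ≤ KF * |t - s| ^ ρ)
    (hX : ∀ s ∈ I, ∀ t ∈ I, |X t - X s| ≤ KX * |t - s| ^ γ) :
    HasCoboundaryBound I (fun s t => F s * (X t - X s)) (KF * KX) (γ + ρ) := by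
  intro a ha b hb c hc
  set M := max |b - a| |c - b|
  have hF' : |F b - F a| ≤ KF * M ^ ρ := (hF a ha b hb).trans (by gcongr; exact le_max_left _ _)
  have hX' : |X c - X b| ≤ KX * M ^ γ := (hX b hb c hc).trans (by gcongr; exact le_max_right _ _)
  calc ‖F a * (X c - X a) - F a * (X b - X a) - F b * (X c - X b)‖
      = |(F b - F a) * (X c - X b)| := by
        rw [Real.norm_eq_abs, ← abs_neg]; congr 1; ring
    _ ≤ KF * M ^ ρ * (KX * M ^ γ) := by
        rw [abs_mul]; exact mul_le_mul hF' hX' (abs_nonneg _) (by positivity)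
    _ = KF * KX * M ^ (γ + ρ) := by
        rw [Real.rpow_add_of_nonneg (le_max_of_le_left (abs_nonneg _)) hγ hρ]; ring

end YoungGerm

end Sewing

end

/-- Young's integral: if `F ∈ C^ρ(I)`, `X ∈ C^γ(I)` with `γ + ρ > 1`, there is an
indefinite integral `A` (with `∫_s^t F dX = A t - A s`) such that for all `s, t ∈ I`,
`|∫_s^t (F_u - F_s) dX_u| = |A t - A s - F_s (X_t - X_s)|
  ≤ (1/(2^{γ+ρ} - 2)) |t-s|^{γ+ρ} ‖F‖_ρ ‖X‖_γ`. -/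
theorem young_integral (I : Set ℝ) (hI : I.OrdConnected) (F X : ℝ → ℝ)
    (γ ρ KF KX : ℝ) (hγ : 0 < γ) (hρ : 0 < ρ) (h1 : 1 < γ + ρ)
    (hKF : 0 ≤ KF) (hKX : 0 ≤ KX)
    (hF : ∀ s ∈ I, ∀ t ∈ I, |F t - F s| ≤ KF * |t - s| ^ ρ)
    (hX : ∀ s ∈ I, ∀ t ∈ I, |X t - X s| ≤ KX * |t - s| ^ γ) :
    ∃ A : ℝ → ℝ, ∀ s ∈ I, ∀ t ∈ I,
      |(A t - A s) - F s * (X t - X s)|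
        ≤ (1 / ((2 : ℝ) ^ (γ + ρ) - 2)) * |t - s| ^ (γ + ρ) * KF * KX := by
  have hFc : ContinuousOn F I := continuousOn_of_norm_sub_le_rpow hρ hF
  have hXc : ContinuousOn X I := continuousOn_of_norm_sub_le_rpow hγ hX
  have hΞ := Sewing.hasCoboundaryBound_mul_sub hγ.le hρ.le hKF hKX hF hX
  obtain ⟨A, hA⟩ := hΞ.exists_forall_norm_sub_sub_le hI
    (Sewing.continuousOn_uncurry_mul_sub hFc hXc) h1 (mul_nonneg hKF hKX)
  exact ⟨A, fun s hs t ht => (hA s hs t ht).trans_eq (by ring)⟩
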